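/- Fix a positive integer n and real β > 0. Let A_n be the n×n tridiagonal matrix with diagonal −k², subdiagonal k(k+n)/2, superdiagonal k(k−n)/2, and B_n diagonal with entries k. Define s_0 = −((n+1)/2) A_n^{−1} e_n (where e_n = (1,0,…,0)^T) and s_k = i (k I − (4/β) A_n)^{−1} B_n s_{k−1} for k ≥ 1. Then all matrices k I − (4/β)A_n (k ≥ 1) are invertible, s_0 = (1,1,…,1)^T, and there exists κ > 0 such that ‖s_k‖ ≤ κ^k ∏_{j=1}^k n/(j + 4n/β) for all k ≥ 0; in particular the power series ∑_{k≥0} s_k λ^k has infinite radius of convergence. -/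

import Mathlib

open Finset Matrix

/-- The tridiagonal matrix `A_n` (complex entries) with `[A_n]_{k,k} = -k²`,
`[A_n]_{k,k-1} = k(k+n)/2`, `[A_n]_{k,k+1} = k(k-n)/2`, indices `1,…,n` on `Fin n`. -/
noncomputable def AmatC (n : ℕ) : Matrix (Fin n) (Fin n) ℂ :=
  fun i j =>
    if (i : ℕ) = (j : ℕ) then -(((i : ℕ) + 1 : ℂ) ^ 2)
    else if (i : ℕ) = (j : ℕ) + 1 then (((i : ℕ) + 1 : ℂ) * (((i : ℕ) + 1) + n)) / 2
    else if (j : ℕ) = (i : ℕ) + 1 then (((i : ℕ) + 1 : ℂ) * (((i : ℕ) + 1 : ℂ) - n)) / 2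
    else 0

/-- Diagonal matrix `B_n` with `[B_n]_{kk} = k` (complex entries). -/
noncomputable def BmatC (n : ℕ) : Matrix (Fin n) (Fin n) ℂ :=
  Matrix.diagonal (fun k : Fin n => ((k : ℕ) + 1 : ℂ))

/-- First coordinate vector `e_n = (1,0,…,0)`. -/
noncomputable def evecC (n : ℕ) : Fin n → ℂ := fun k => if (k : ℕ) = 0 then 1 else 0

/-!
The off-diagonals of `A_n` have opposite signs (`k(k+n)/2 > 0 > k(k-n)/2`), so there are positive
weights `w` with `w_{k+1} [A_n]_{k+1,k} = -w_k [A_n]_{k,k+1}`. For `W = diag w` this makes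
`W A_n + (W A_n)ᴴ = -2 diag(w_k k²)`, so in the `w`-weighted `ℓ²` norm `Re ⟪v, A_n v⟫ ≤ -‖v‖²`,
and `‖(t - c A_n) v‖ ≥ (t + c) ‖v‖` for `c ≥ 0`. Hence `A_n` and all `k - (4/β) A_n` are
invertible and, since `‖B_n‖ ≤ n` in that norm, the `k`-th step of the recursion shrinks the
weighted norm by the factor `n / (k + 4/β) ≤ n · n / (k + 4n/β)`. Comparing the weighted norm with
the sup norm gives the bound, and the product is at most `n^k / k!`.
-/

open scoped ComplexOrder MatrixOrder Nat

section Coercive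

variable {𝕜 E : Type*} [RCLike 𝕜] [NormedAddCommGroup E] [InnerProductSpace 𝕜 E]

theorem mul_norm_le_of_mul_norm_sq_le_re_inner {x y : E} {m : ℝ}
    (h : m * ‖x‖ ^ 2 ≤ RCLike.re (inner 𝕜 x y)) : m * ‖x‖ ≤ ‖y‖ := by
  rcases (norm_nonneg x).eq_or_lt with hx | hx
  · simp [← hx]
  · refine le_of_mul_le_mul_left ?_ hx
    nlinarith [re_inner_le_norm (𝕜 := 𝕜) x y]

end Coercive

theorem Matrix.star_dotProduct_conjTranspose_mulVec {ι R : Type*} [Fintype ι] [CommRing R]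
    [StarRing R] (S : Matrix ι ι R) (v : ι → R) :
    star v ⬝ᵥ Sᴴ *ᵥ v = star (star v ⬝ᵥ S *ᵥ v) := by
  rw [mulVec_conjTranspose, star_dotProduct_star, dotProduct_mulVec]

section WeightedEuclidean

variable {ι : Type*} [Fintype ι]

/-- `v` in the Hilbert space `ℓ²(ι, w)`, realised isometrically inside `EuclideanSpace ℂ ι`. -/
noncomputable def weightedEuclidean (w : ι → ℝ) (v : ι → ℂ) : EuclideanSpace ℂ ι :=
  WithLp.toLp 2 fun i => (√(w i) : ℂ) * v i

variable {w : ι → ℝ}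

theorem inner_weightedEuclidean [DecidableEq ι] (hw : 0 ≤ w) (u v : ι → ℂ) :
    inner ℂ (weightedEuclidean w u) (weightedEuclidean w v) =
      star u ⬝ᵥ diagonal (fun i => (w i : ℂ)) *ᵥ v := by
  simp only [weightedEuclidean, EuclideanSpace.inner_toLp_toLp, dotProduct, mulVec_diagonal]
  refine sum_congr rfl fun i _ => ?_
  have hsq : ((√(w i) : ℝ) : ℂ) * (√(w i) : ℝ) = w i := by
    rw [← Complex.ofReal_mul, Real.mul_self_sqrt (hw i)]
  simp only [Pi.star_apply, star_mul', Complex.star_def, Complex.conj_ofReal]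
  linear_combination starRingEnd ℂ (u i) * v i * hsq

omit [Fintype ι] in
theorem weightedEuclidean_smul (a : ℂ) (v : ι → ℂ) :
    weightedEuclidean w (a • v) = a • weightedEuclidean w v := by
  ext i
  simp only [weightedEuclidean, Pi.smul_apply, smul_eq_mul, PiLp.smul_apply]
  ring

theorem norm_le_mul_norm_weightedEuclidean (hw : ∀ i, 0 < w i) (v : ι → ℂ) :
    ‖v‖ ≤ (∑ i, (√(w i))⁻¹) * ‖weightedEuclidean w v‖ := by
  refine pi_norm_le_iff_of_nonneg (by positivity) |>.mpr fun i => ?_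
  have hsqrt : 0 < √(w i) := Real.sqrt_pos.mpr (hw i)
  have hcoord : √(w i) * ‖v i‖ ≤ ‖weightedEuclidean w v‖ := by
    simpa [weightedEuclidean, abs_of_pos hsqrt] using
      PiLp.norm_apply_le (weightedEuclidean w v) i
  calc ‖v i‖ ≤ (√(w i))⁻¹ * ‖weightedEuclidean w v‖ := by
        rw [inv_mul_eq_div, le_div_iff₀ hsqrt]
        linarith
    _ ≤ _ := by
        gcongr
        exact single_le_sum (f := fun j => (√(w j))⁻¹) (fun j _ => by positivity) (mem_univ i)

theorem norm_weightedEuclidean_diagonal_mulVec_le [DecidableEq ι] {b : ι → ℂ} {r : ℝ}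
    (hr : 0 ≤ r) (hb : ∀ i, ‖b i‖ ≤ r) (v : ι → ℂ) :
    ‖weightedEuclidean w (diagonal b *ᵥ v)‖ ≤ r * ‖weightedEuclidean w v‖ := by
  refine le_of_sq_le_sq ?_ (by positivity)
  simp only [mul_pow, EuclideanSpace.norm_sq_eq, mul_sum, weightedEuclidean, mulVec_diagonal]
  refine sum_le_sum fun i _ => ?_
  rw [mul_left_comm, norm_mul (b i), mul_pow]
  gcongr
  exact hb i

theorem mul_norm_weightedEuclidean_le_of_le [DecidableEq ι] (hw : 0 ≤ w)
    {M : Matrix ι ι ℂ} {m : ℝ}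
    (hM : ((2 * m : ℝ) : ℂ) • diagonal (fun i => (w i : ℂ)) ≤
      diagonal (fun i => (w i : ℂ)) * M + (diagonal (fun i => (w i : ℂ)) * M)ᴴ)
    (v : ι → ℂ) :
    m * ‖weightedEuclidean w v‖ ≤ ‖weightedEuclidean w (M *ᵥ v)‖ := by
  refine mul_norm_le_of_mul_norm_sq_le_re_inner (𝕜 := ℂ) ?_
  have h := (Matrix.le_iff.mp hM).re_dotProduct_nonneg v
  rw [← inner_self_eq_norm_sq (𝕜 := ℂ), inner_weightedEuclidean hw, inner_weightedEuclidean hw]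
  simp only [sub_mulVec, add_mulVec, dotProduct_sub, dotProduct_add, smul_mulVec,
    dotProduct_smul, mulVec_mulVec, star_dotProduct_conjTranspose_mulVec, RCLike.star_def,
    map_sub, map_add, RCLike.conj_re, smul_eq_mul, RCLike.re_to_complex,
    Complex.re_ofReal_mul] at h ⊢
  linarith

theorem isUnit_of_mul_norm_weightedEuclidean_le [DecidableEq ι] (hw : ∀ i, 0 < w i)
    {M : Matrix ι ι ℂ} {m : ℝ} (hm : 0 < m)
    (hM : ∀ v, m * ‖weightedEuclidean w v‖ ≤ ‖weightedEuclidean w (M *ᵥ v)‖) : IsUnit M := by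
  rw [isUnit_iff_isUnit_det, isUnit_iff_ne_zero]
  intro hdet
  obtain ⟨v, hv, hMv⟩ := exists_mulVec_eq_zero_iff.mpr hdet
  have hzero : ‖weightedEuclidean w v‖ = 0 := by
    have := hM v
    rw [hMv, ← zero_smul ℂ (0 : ι → ℂ), weightedEuclidean_smul, zero_smul, norm_zero] at this
    nlinarith [norm_nonneg (weightedEuclidean w v)]
  apply hv
  simpa [hzero] using norm_le_mul_norm_weightedEuclidean hw v

theorem mul_norm_weightedEuclidean_inv_mulVec_le [DecidableEq ι] {M : Matrix ι ι ℂ} {m : ℝ}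
    (hunit : IsUnit M)
    (hM : ∀ v, m * ‖weightedEuclidean w v‖ ≤ ‖weightedEuclidean w (M *ᵥ v)‖) (y : ι → ℂ) :
    m * ‖weightedEuclidean w (M⁻¹ *ᵥ y)‖ ≤ ‖weightedEuclidean w y‖ := by
  simpa [mulVec_mulVec, mul_nonsing_inv _ ((isUnit_iff_isUnit_det M).mp hunit)] using
    hM (M⁻¹ *ᵥ y)

end WeightedEuclidean

theorem le_prod_Icc_mul_of_le_mul {a r : ℕ → ℝ} (hr : ∀ k, 0 ≤ r k)
    (h : ∀ k, a (k + 1) ≤ r (k + 1) * a k) (k : ℕ) : a k ≤ (∏ j ∈ Icc 1 k, r j) * a 0 := by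
  induction k with
  | zero => simp
  | succ k ih =>
    rw [prod_Icc_succ_top (by omega), mul_comm _ (r (k + 1)), mul_assoc]
    exact (h k).trans (mul_le_mul_of_nonneg_left ih (hr _))

theorem prod_Icc_div_add_le_pow_mul {x a : ℝ} (hx : 1 ≤ x) (ha : 0 ≤ a) (k : ℕ) :
    ∏ j ∈ Icc 1 k, x / (j + a) ≤ x ^ k * ∏ j ∈ Icc 1 k, x / (j + x * a) := by
  rw [show x ^ k = ∏ _j ∈ Icc 1 k, x by simp, ← prod_mul_distrib]
  refine prod_le_prod (fun j _ => by positivity) fun j hj => ?_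
  have hj : (1 : ℝ) ≤ j := by exact_mod_cast (mem_Icc.mp hj).1
  rw [← mul_div_assoc, div_le_div_iff₀ (by positivity) (by positivity)]
  nlinarith [mul_nonneg (mul_nonneg (by linarith : (0 : ℝ) ≤ x) (by linarith : (0 : ℝ) ≤ j))
    (sub_nonneg.2 hx)]

theorem prod_Icc_div_add_le_pow_div_factorial {x a : ℝ} (hx : 0 ≤ x) (ha : 0 ≤ a) (k : ℕ) :
    ∏ j ∈ Icc 1 k, x / (j + a) ≤ x ^ k / k ! := by
  calc ∏ j ∈ Icc 1 k, x / (j + a) ≤ ∏ j ∈ Icc 1 k, x / j := by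
        refine prod_le_prod (fun j _ => by positivity) fun j hj => ?_
        have hj : (0 : ℝ) < j := by exact_mod_cast (mem_Icc.mp hj).1
        exact div_le_div_of_nonneg_left hx hj (le_add_of_nonneg_right ha)
    _ = x ^ k / k ! := by
        rw [prod_div_distrib, prod_const, Nat.card_Icc, Nat.add_sub_cancel, ← Nat.cast_prod,
          ← Ico_add_one_right_eq_Icc, prod_Ico_id_eq_factorial]

theorem exists_pos_pow_mul_bound {a P : ℕ → ℝ} {D r : ℝ} (hD : 0 ≤ D) (hr : 0 ≤ r)
    (hP : ∀ k, 0 ≤ P k) (h₀ : a 0 ≤ P 0) (h : ∀ k, a k ≤ D * r ^ k * P k) :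
    ∃ κ > 0, ∀ k, a k ≤ κ ^ k * P k := by
  refine ⟨(D + 1) * (r + 1), by positivity, fun k => ?_⟩
  rcases Nat.eq_zero_or_pos k with rfl | hk
  · simpa using h₀
  refine (h k).trans (mul_le_mul_of_nonneg_right ?_ (hP k))
  rw [mul_pow]
  gcongr
  · exact (le_add_of_nonneg_right zero_le_one).trans (le_self_pow₀ (by linarith) hk.ne')
  · linarith

theorem summable_mul_pow_of_le_pow_div_factorial {a : ℕ → ℝ} {C x : ℝ} (ha : ∀ k, 0 ≤ a k)
    (h : ∀ k, a k ≤ C ^ k / k !) (hx : 0 ≤ x) : Summable fun k => a k * x ^ k := by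
  refine (Real.summable_pow_div_factorial (C * x)).of_nonneg_of_le
    (fun k => mul_nonneg (ha k) (pow_nonneg hx k)) fun k => ?_
  rw [mul_pow, mul_div_right_comm]
  exact mul_le_mul_of_nonneg_right (h k) (pow_nonneg hx k)

noncomputable def symmetrizingWeight (n : ℕ) : ℕ → ℝ
  | 0 => 1
  | i + 1 => symmetrizingWeight n i * ((i + 1) * (n - (i + 1)) / ((i + 2) * (n + i + 2)))

theorem symmetrizingWeight_pos {n i : ℕ} (hi : i < n) : 0 < symmetrizingWeight n i := by
  induction i with
  | zero => simp [symmetrizingWeight]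
  | succ i ih =>
    have hi' : (i : ℝ) + 1 < n := by exact_mod_cast hi
    have hprev := ih (by omega)
    have hfactor : (0 : ℝ) < (i + 1) * (n - (i + 1)) := by nlinarith
    rw [symmetrizingWeight]
    positivity

theorem symmetrizingWeight_succ_mul (n i : ℕ) :
    symmetrizingWeight n (i + 1) * ((i + 2) * (i + 2 + n)) =
      symmetrizingWeight n i * ((i + 1) * (n - (i + 1))) := by
  rw [symmetrizingWeight]
  field_simp
  ring

theorem conj_AmatC_apply (n : ℕ) (i j : Fin n) : starRingEnd ℂ (AmatC n i j) = AmatC n i j := by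
  unfold AmatC
  split_ifs <;> simp [map_ofNat]

theorem diagonal_mul_AmatC_add_conjTranspose (n : ℕ) :
    diagonal (fun i : Fin n => (symmetrizingWeight n i : ℂ)) * AmatC n
        + (diagonal (fun i : Fin n => (symmetrizingWeight n i : ℂ)) * AmatC n)ᴴ
      = diagonal (fun i : Fin n => -2 * (symmetrizingWeight n i : ℂ) * ((i : ℕ) + 1) ^ 2) := by
  have key := fun k => congrArg (fun x : ℝ => (x : ℂ)) (symmetrizingWeight_succ_mul n k)
  push_cast at key
  ext ⟨i, hi⟩ ⟨j, hj⟩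
  simp only [Matrix.add_apply, diagonal_mul, conjTranspose_apply, star_mul', diagonal_apply,
    Complex.star_def, conj_AmatC_apply, Complex.conj_ofReal, Fin.ext_iff]
  obtain rfl | rfl | rfl | ⟨h₁, h₂, h₃⟩ :
      i = j ∨ i = j + 1 ∨ j = i + 1 ∨ (i ≠ j ∧ i ≠ j + 1 ∧ j ≠ i + 1) := by omega
  · simp [AmatC]
    ring
  · simp [AmatC, show j ≠ j + 1 + 1 by omega]
    linear_combination key j / 2
  · simp [AmatC, show i ≠ i + 1 + 1 by omega]
    linear_combination key i / 2
  · simp [AmatC, h₁, h₂, h₃, h₁.symm]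

theorem smul_diagonal_le_symmetrized_resolvent (n : ℕ) (t : ℝ) {c : ℝ} (hc : 0 ≤ c) :
    ((2 * (t + c) : ℝ) : ℂ) • diagonal (fun i : Fin n => (symmetrizingWeight n i : ℂ)) ≤
      diagonal (fun i : Fin n => (symmetrizingWeight n i : ℂ)) *
          ((t : ℂ) • 1 - (c : ℂ) • AmatC n)
        + (diagonal (fun i : Fin n => (symmetrizingWeight n i : ℂ)) *
          ((t : ℂ) • 1 - (c : ℂ) • AmatC n))ᴴ := by
  have hdiff : diagonal (fun i : Fin n => (symmetrizingWeight n i : ℂ)) *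
          ((t : ℂ) • 1 - (c : ℂ) • AmatC n)
        + (diagonal (fun i : Fin n => (symmetrizingWeight n i : ℂ)) *
          ((t : ℂ) • 1 - (c : ℂ) • AmatC n))ᴴ
        - ((2 * (t + c) : ℝ) : ℂ) • diagonal (fun i : Fin n => (symmetrizingWeight n i : ℂ)) =
      diagonal fun i : Fin n =>
        ((2 * c * symmetrizingWeight n i * (((i : ℕ) + 1) ^ 2 - 1) : ℝ) : ℂ) := by
    ext i j
    have hA := congr($(diagonal_mul_AmatC_add_conjTranspose n) i j)
    simp only [Matrix.add_apply, diagonal_mul, conjTranspose_apply, star_mul', diagonal_apply,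
      Matrix.sub_apply, Matrix.smul_apply, one_apply, smul_eq_mul, Complex.star_def, map_sub,
      map_mul, conj_AmatC_apply, Complex.conj_ofReal] at hA ⊢
    rcases eq_or_ne i j with rfl | hij
    · simp only [if_true, mul_one, map_one] at hA ⊢
      push_cast
      linear_combination (-(c : ℂ)) * hA
    · simp only [hij, hij.symm, if_false, mul_zero, map_zero, zero_sub, sub_zero] at hA ⊢
      linear_combination (-(c : ℂ)) * hA
  rw [Matrix.le_iff, hdiff]
  refine PosSemidef.diagonal fun i => Complex.zero_le_real.mpr ?_
  have hsq : (1 : ℝ) ≤ ((i : ℕ) + 1) ^ 2 := by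
    nlinarith [(Nat.cast_nonneg (i : ℕ) : (0 : ℝ) ≤ (i : ℕ))]
  have hw := symmetrizingWeight_pos i.isLt
  positivity

theorem mul_norm_weightedEuclidean_le_resolvent_AmatC (n : ℕ) (t : ℝ) {c : ℝ} (hc : 0 ≤ c)
    (v : Fin n → ℂ) :
    (t + c) * ‖weightedEuclidean (fun i : Fin n => symmetrizingWeight n i) v‖ ≤
      ‖weightedEuclidean (fun i : Fin n => symmetrizingWeight n i)
        (((t : ℂ) • 1 - (c : ℂ) • AmatC n) *ᵥ v)‖ :=
  mul_norm_weightedEuclidean_le_of_le (fun i => (symmetrizingWeight_pos i.isLt).le)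
    (smul_diagonal_le_symmetrized_resolvent n t hc) v

theorem isUnit_resolvent_AmatC (n : ℕ) {t c : ℝ} (hc : 0 ≤ c) (htc : 0 < t + c) :
    IsUnit ((t : ℂ) • (1 : Matrix (Fin n) (Fin n) ℂ) - (c : ℂ) • AmatC n) :=
  isUnit_of_mul_norm_weightedEuclidean_le (fun i => symmetrizingWeight_pos i.isLt) htc
    (mul_norm_weightedEuclidean_le_resolvent_AmatC n t hc)

theorem isUnit_AmatC (n : ℕ) : IsUnit (AmatC n) := by
  simpa using (isUnit_resolvent_AmatC n (t := 0) zero_le_one (by norm_num)).neg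

theorem Fin.sum_univ_ite_val_eq {M : Type*} [AddCommMonoid M] (n m : ℕ) (a : M) :
    ∑ j : Fin n, (if (j : ℕ) = m then a else 0) = if m < n then a else 0 := by
  rw [← Finset.sum_range (fun j => if j = m then a else 0), sum_ite_eq']
  simp only [mem_range]

theorem AmatC_mulVec_one (n : ℕ) :
    AmatC n *ᵥ (fun _ => 1) = (-(((n : ℂ) + 1) / 2)) • evecC n := by
  ext ⟨i, hi⟩
  have hrow : ∀ j : Fin n, AmatC n ⟨i, hi⟩ j =
      (if (j : ℕ) = i then -((i + 1 : ℂ) ^ 2) else 0)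
      + (if (j : ℕ) + 1 = i then (i + 1 : ℂ) * (i + 1 + n) / 2 else 0)
      + (if (j : ℕ) = i + 1 then (i + 1 : ℂ) * (i + 1 - n) / 2 else 0) := by
    intro j
    simp only [AmatC]
    split_ifs <;> first | (exfalso; omega) | ring
  simp only [mulVec, dotProduct, mul_one, Pi.smul_apply, evecC, smul_eq_mul, hrow,
    sum_add_distrib, Fin.sum_univ_ite_val_eq]
  rcases i with _ | i
  · simp only [Nat.add_eq_zero_iff, one_ne_zero, and_false, if_false, sum_const_zero, hi,
      if_true]
    split_ifs with h <;> push_cast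
    · ring
    · obtain rfl : n = 1 := by omega
      ring
  · simp only [Nat.add_right_cancel_iff, Fin.sum_univ_ite_val_eq, hi, (by omega : i < n),
      if_true, Nat.add_one_ne_zero, if_false]
    split_ifs with h <;> push_cast
    · ring
    · obtain rfl : n = i + 2 := by omega
      push_cast
      ring

theorem smul_AmatC_inv_mulVec_evecC (n : ℕ) :
    (-(((n : ℂ) + 1) / 2)) • (AmatC n)⁻¹ *ᵥ evecC n = fun _ => 1 := by
  rw [← mulVec_smul, ← AmatC_mulVec_one, mulVec_mulVec,
    nonsing_inv_mul _ ((isUnit_iff_isUnit_det _).mp (isUnit_AmatC n)), one_mulVec]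

theorem norm_weightedEuclidean_BmatC_mulVec_le {n : ℕ} (w : Fin n → ℝ) (v : Fin n → ℂ) :
    ‖weightedEuclidean w (BmatC n *ᵥ v)‖ ≤ n * ‖weightedEuclidean w v‖ :=
  norm_weightedEuclidean_diagonal_mulVec_le (Nat.cast_nonneg n) (fun i => by
    rw [← Nat.cast_succ, Complex.norm_natCast]
    exact_mod_cast i.isLt) v

section Recursion

variable {n : ℕ} {c : ℝ} {s : ℕ → Fin n → ℂ}

theorem norm_weightedEuclidean_le_prod_mul (hc : 0 < c)
    (hs : ∀ k : ℕ, s (k + 1) = Complex.I •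
      (((k + 1 : ℕ) : ℂ) • (1 : Matrix (Fin n) (Fin n) ℂ) - (c : ℂ) • AmatC n)⁻¹ *ᵥ
        (BmatC n *ᵥ s k)) (k : ℕ) :
    ‖weightedEuclidean (fun i : Fin n => symmetrizingWeight n i) (s k)‖ ≤
      (∏ j ∈ Icc 1 k, (n : ℝ) / (j + c)) *
        ‖weightedEuclidean (fun i : Fin n => symmetrizingWeight n i) (s 0)‖ := by
  refine le_prod_Icc_mul_of_le_mul
    (a := fun k => ‖weightedEuclidean (fun i : Fin n => symmetrizingWeight n i) (s k)‖)
    (r := fun j => n / (j + c)) (fun j => by positivity) (fun k => ?_) k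
  rw [hs, weightedEuclidean_smul, norm_smul, Complex.norm_I, one_mul, div_mul_eq_mul_div,
    le_div_iff₀ (by positivity), mul_comm]
  have hres (v : Fin n → ℂ) :=
    mul_norm_weightedEuclidean_le_resolvent_AmatC n (k + 1 : ℕ) hc.le v
  have hunit := isUnit_resolvent_AmatC n (t := (k + 1 : ℕ)) hc.le (by positivity)
  push_cast at hres hunit ⊢
  exact (mul_norm_weightedEuclidean_inv_mulVec_le hunit hres _).trans
    (norm_weightedEuclidean_BmatC_mulVec_le _ (s k))

theorem exists_norm_le_mul_pow_mul_prod (hn : 0 < n) (hc : 0 < c)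
    (hs : ∀ k : ℕ, s (k + 1) = Complex.I •
      (((k + 1 : ℕ) : ℂ) • (1 : Matrix (Fin n) (Fin n) ℂ) - (c : ℂ) • AmatC n)⁻¹ *ᵥ
        (BmatC n *ᵥ s k)) :
    ∃ D ≥ 0, ∀ k, ‖s k‖ ≤ D * n ^ k * ∏ j ∈ Icc 1 k, (n : ℝ) / (j + n * c) := by
  set W := weightedEuclidean (fun i : Fin n => symmetrizingWeight n i)
  set C := ∑ i : Fin n, (√(symmetrizingWeight n i))⁻¹
  refine ⟨C * ‖W (s 0)‖, by positivity, fun k => ?_⟩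
  calc ‖s k‖ ≤ C * ‖W (s k)‖ :=
        norm_le_mul_norm_weightedEuclidean (fun i => symmetrizingWeight_pos i.isLt) (s k)
    _ ≤ C * ((∏ j ∈ Icc 1 k, (n : ℝ) / (j + c)) * ‖W (s 0)‖) := by
        gcongr
        exact norm_weightedEuclidean_le_prod_mul hc hs k
    _ ≤ _ := by
        rw [mul_comm (∏ j ∈ Icc 1 k, _), ← mul_assoc, mul_assoc _ (n ^ k : ℝ)]
        gcongr
        exact prod_Icc_div_add_le_pow_mul (by exact_mod_cast hn) hc.le k

end Recursion

theorem stmt14 (n : ℕ) (hn : 0 < n) (β : ℝ) (hβ : 0 < β)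
    (s : ℕ → (Fin n → ℂ))
    (hs0 : s 0 = (-(((n : ℂ) + 1) / 2)) • (AmatC n)⁻¹.mulVec (evecC n))
    (hsk : ∀ k : ℕ, 1 ≤ k →
      s k = Complex.I •
        (((k : ℂ) • (1 : Matrix (Fin n) (Fin n) ℂ) - ((4 / β : ℝ) : ℂ) • AmatC n)⁻¹).mulVec
          ((BmatC n).mulVec (s (k - 1)))) :
    (∀ k : ℕ, 1 ≤ k →
        IsUnit ((k : ℂ) • (1 : Matrix (Fin n) (Fin n) ℂ) - ((4 / β : ℝ) : ℂ) • AmatC n))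
      ∧ s 0 = (fun _ => 1)
      ∧ (∃ κ > (0 : ℝ), ∀ k : ℕ,
          ‖s k‖ ≤ κ ^ k * ∏ j ∈ Finset.Icc 1 k, (n : ℝ) / ((j : ℝ) + 4 * n / β))
      ∧ ∀ lam : ℂ, Summable (fun k : ℕ => ‖s k‖ * ‖lam‖ ^ k) := by
  have hc : 0 < 4 / β := by positivity
  have hs0' : s 0 = fun _ => 1 := hs0.trans (smul_AmatC_inv_mulVec_evecC n)
  obtain ⟨D, hD, hsD⟩ := exists_norm_le_mul_pow_mul_prod hn hc fun k => by
    simpa only [Nat.add_sub_cancel] using hsk (k + 1) (by omega)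
  obtain ⟨κ, hκ, hbound⟩ := exists_pos_pow_mul_bound (a := fun k => ‖s k‖)
    (P := fun k => ∏ j ∈ Icc 1 k, (n : ℝ) / ((j : ℝ) + 4 * n / β)) hD (Nat.cast_nonneg n)
    (fun k => by positivity) (by simpa [hs0'] using pi_norm_const_le (1 : ℂ))
    fun k => (hsD k).trans_eq (by simp only [mul_div_assoc', mul_comm (n : ℝ) 4])
  refine ⟨fun k _ => by simpa using isUnit_resolvent_AmatC n (t := k) hc.le (by positivity),
    hs0', ⟨κ, hκ, hbound⟩, fun lam =>
      summable_mul_pow_of_le_pow_div_factorial (C := κ * n) (fun k => norm_nonneg _)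
        (fun k => (hbound k).trans ?_) (norm_nonneg lam)⟩
  rw [mul_pow, mul_div_assoc (κ ^ k)]
  gcongr
  exact prod_Icc_div_add_le_pow_div_factorial (Nat.cast_nonneg n) (by positivity) k
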